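/- Let d ≥ 2 and for x ∈ ℝ^d define the (d−1)×(d−1) matrix N(x) = diag(x₁,…,x_{d−1}) + x_d · J, where J is the all-ones matrix; i.e., N(x)ᵢᵢ = xᵢ + x_d and N(x)ᵢⱼ = x_d for i ≠ j. Then det N(x) = E_{d−1}(x₁,…,x_d) as a polynomial identity, where E_{d−1} is the (d−1)-st elementary symmetric polynomial in d variables. (This is the determinantal representation underlying the first derivative cone of the nonnegative orthant ℝ^d₊ with hyperbolic polynomial x₁x₂⋯x_d.) -/

import Mathlib

/-- The `k`-th elementary symmetric function of `x : Fin d → ℝ`. -/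
noncomputable def esymm {d : ℕ} (k : ℕ) (x : Fin d → ℝ) : ℝ :=
  ∑ s ∈ Finset.powersetCard k (Finset.univ : Finset (Fin d)), ∏ i ∈ s, x i

/-!
Write `N(x) = diag(a) + t 𝟙𝟙ᵀ` with `a = (x₁, …, x_{d-1})` and `t = x_d`. Expanding
`det (A + u vᵀ)` multilinearly in the rows, every term that takes two rows from the rank-one
part has two proportional rows and vanishes; this gives the matrix determinant lemma
`det (A + u vᵀ) = det A + vᵀ adj(A) u` with no invertibility assumption. For `A = diag(a)`
it reads `det N(x) = ∏ aᵢ + t ∑ᵢ ∏_{j ≠ i} aⱼ`, which is `E_{d-1}(x)` sorted by whether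
the one omitted variable is `x_d` or not.
-/

open Finset Matrix

theorem Finset.sum_eq_apply_empty_add_sum_singleton {ι M : Type*} [Fintype ι] [DecidableEq ι]
    [AddCommMonoid M] (g : Finset ι → M) (hg : ∀ t : Finset ι, 2 ≤ #t → g t = 0) :
    ∑ t, g t = g ∅ + ∑ i, g {i} := by
  rw [← sum_subset (subset_univ (insert ∅ (univ.map ⟨singleton, singleton_injective⟩))),
    sum_insert (by simp), sum_map]
  · rfl
  intro t _ ht
  refine hg t ?_
  by_contra! hcard
  obtain h | h : #t = 0 ∨ #t = 1 := by omega
  · exact ht (mem_insert.2 (.inl (card_eq_zero.1 h)))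
  · obtain ⟨i, rfl⟩ := card_eq_one.1 h
    exact ht (mem_insert_of_mem (mem_map_of_mem _ (mem_univ i)))

namespace Matrix

variable {n R : Type*} [Fintype n] [DecidableEq n] [CommRing R]

theorem det_updateRow_eq_vecMul_adjugate (A : Matrix n n R) (i : n) (v : n → R) :
    (A.updateRow i v).det = (v ᵥ* A.adjugate) i := by
  rw [← cramer_transpose_apply, cramer_eq_adjugate_mulVec, ← adjugate_transpose,
    mulVec_transpose]

theorem det_add_vecMulVec (A : Matrix n n R) (u v : n → R) :
    (A + vecMulVec u v).det = A.det + v ⬝ᵥ A.adjugate *ᵥ u := by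
  obtain ⟨r, rfl⟩ : ∃ r : n → n → R, of r = A := ⟨A, rfl⟩
  have hexpand : (of r + vecMulVec u v).det
      = ∑ t : Finset n, detRowAlternating (t.piecewise (fun i => u i • v) r) := by
    have hrows : of r + vecMulVec u v = of ((fun i => u i • v) + r) := by
      ext i j
      simp [vecMulVec_apply, add_comm]
    rw [hrows]
    exact (detRowAlternating (R := R) (n := n)).map_add_univ _ _
  rw [hexpand, sum_eq_apply_empty_add_sum_singleton]
  · congr 1
    rw [dotProduct_mulVec, dotProduct_comm]
    refine sum_congr rfl fun i _ => ?_
    rw [piecewise_singleton]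
    change ((of r).updateRow i (u i • v)).det = _
    rw [det_updateRow_smul, det_updateRow_eq_vecMul_adjugate]
  · intro t ht
    obtain ⟨i, hi, j, hj, hij⟩ := one_lt_card.mp ht
    set m := t.piecewise (fun _ => v) r
    have hscale : t.piecewise (fun i => u i • v) r = t.piecewise (fun i => u i • m i) m := by
      ext k : 1
      by_cases hk : k ∈ t <;> simp [m, hk]
    have hzero : detRowAlternating m = 0 := det_zero_of_row_eq hij (by simp [m, hi, hj])
    rw [hscale]
    exact ((detRowAlternating (R := R) (n := n)).toMultilinearMap.map_piecewise_smul _ _ _).trans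
      (by rw [AlternatingMap.coe_multilinearMap, hzero, smul_zero])

theorem det_diagonal_add_const (a : n → R) (t : R) :
    (diagonal a + of fun _ _ => t).det = ∏ i, a i + t * ∑ i, ∏ j ∈ univ.erase i, a j := by
  have hconst : (of fun _ _ => t : Matrix n n R) = vecMulVec (fun _ => t) (fun _ => 1) := by
    ext i j
    simp [vecMulVec_apply]
  rw [hconst, det_add_vecMulVec, det_diagonal, adjugate_diagonal]
  simp [dotProduct, mulVec_diagonal, mul_sum, mul_comm]

end Matrix

theorem Finset.powersetCard_card_sub_one_univ {ι : Type*} [Fintype ι] [DecidableEq ι]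
    [Nonempty ι] :
    powersetCard (Fintype.card ι - 1) (univ : Finset ι) = univ.image fun i => univ.erase i := by
  ext s
  simp only [mem_powersetCard, subset_univ, true_and, mem_image, mem_univ]
  constructor
  · intro hs
    have hcompl : #sᶜ = 1 := by
      have := Fintype.card_pos (α := ι)
      rw [card_compl]
      omega
    obtain ⟨i, hi⟩ := card_eq_one.1 hcompl
    exact ⟨i, by rw [← compl_singleton, ← hi, compl_compl]⟩
  · rintro ⟨i, rfl⟩
    rw [card_erase_of_mem (mem_univ i), card_univ]

theorem esymm_eq_sum_prod_erase {n : ℕ} (x : Fin (n + 1) → ℝ) :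
    esymm n x = ∑ i, ∏ j ∈ univ.erase i, x j := by
  have h := powersetCard_card_sub_one_univ (ι := Fin (n + 1))
  rw [Fintype.card_fin, Nat.add_sub_cancel] at h
  rw [esymm, h, sum_image (erase_injOn univ)]

theorem Fin.sum_prod_erase {R : Type*} [CommSemiring R] {n : ℕ} (x : Fin (n + 1) → R) :
    ∑ i, ∏ j ∈ univ.erase i, x j
      = ∏ i : Fin n, x i.castSucc
        + x (last n) * ∑ i : Fin n, ∏ j ∈ univ.erase i, x j.castSucc := by
  simp only [← filter_ne', prod_filter, sum_univ_castSucc, prod_univ_castSucc, castSucc_inj,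
    ne_eq, castSucc_ne_last, (castSucc_ne_last _).symm, mul_sum]
  simp [mul_comm, add_comm]

/-- For the `(d-1) × (d-1)` matrix `N(x) = diag(x₁,…,x_{d-1}) + x_d ⬝ J` (with
`J` the all-ones matrix) one has `det N(x) = E_{d-1}(x₁,…,x_d)`: the
determinantal representation underlying the first derivative cone of the
nonnegative orthant. -/
theorem stmt16 {d : ℕ} (hd : 2 ≤ d) (x : Fin d → ℝ) :
    (Matrix.of fun i j : Fin (d - 1) =>
        if i = j then x (Fin.castLE (by omega) i) + x ⟨d - 1, by omega⟩
        else x ⟨d - 1, by omega⟩).det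
      = esymm (d - 1) x := by
  obtain ⟨n, rfl⟩ : ∃ n, d = n + 2 := ⟨d - 2, by omega⟩
  calc _ = (diagonal (fun i : Fin (n + 1) => x i.castSucc)
          + of fun _ _ => x (Fin.last _)).det := by
        congr 1
        ext i j
        by_cases h : i = j <;> simp [h] <;> rfl
    _ = esymm (n + 1) x := by
        rw [det_diagonal_add_const, esymm_eq_sum_prod_erase, Fin.sum_prod_erase x]
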